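/- arXiv:2005.13913 — 3 statements merged into one kernel-verified Lean document; each statement's English description precedes it below -/
import Mathlib

section
/- Let G be the unit disk graph on a finite set P of points in the plane. For any two vertices u, v ∈ P and any independent set X of G with u ∉ X and v ∉ X, we have |(N_G[u] ∪ N_G[v]) ∩ X| ≤ 10. -/
/-!
Translate `u` to the origin. The points of `X` in `N[u]` are then nonzero vectors of length at
most `1` at pairwise distance more than `1`, so by the law of cosines any two of them subtend an
angle whose cosine is below `1 / 2`. Six directions in the plane cannot be pairwise that far
apart: sorting them into six sectors of width `π / 3`, starting at one of them, two would share a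
sector or one would lie in the last sector, within `π / 3` of the first. Hence `|N[u] ∩ X| ≤ 5`,
and the bound `10` is a union bound.
-/

/-- Closed neighborhood of a vertex: the vertex together with its neighbors. -/
def closedNbhd {V : Type*} (G : SimpleGraph V) (v : V) : Set V :=
  {u | u = v ∨ G.Adj u v}

/-- `D` is a liar's dominating set of the vertex subset `A` in `G`. -/
def IsLDSOn {V : Type*} (G : SimpleGraph V) (A D : Set V) : Prop :=
  (∀ v ∈ A, 2 ≤ (closedNbhd G v ∩ D).ncard) ∧
  (∀ u ∈ A, ∀ v ∈ A, u ≠ v →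
    3 ≤ ((closedNbhd G u ∪ closedNbhd G v) ∩ D).ncard)

/-- `D` is a liar's dominating set of `G`. -/
def IsLDS {V : Type*} (G : SimpleGraph V) (D : Set V) : Prop :=
  IsLDSOn G Set.univ D

/-- `I` is an independent set of `G`. -/
def IsIndepSet {V : Type*} (G : SimpleGraph V) (I : Set V) : Prop :=
  ∀ u ∈ I, ∀ v ∈ I, u ≠ v → ¬ G.Adj u v

/-- `I` is a maximal independent set of the subgraph of `G` induced on `A`. -/
def IsMaxIndepOn {V : Type*} (G : SimpleGraph V) (A I : Set V) : Prop :=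
  I ⊆ A ∧ IsIndepSet G I ∧
    ∀ J, J ⊆ A → IsIndepSet G J → I ⊆ J → I = J

/-- `I` is a maximal independent set of `G`. -/
def IsMaxIndep {V : Type*} (G : SimpleGraph V) (I : Set V) : Prop :=
  IsMaxIndepOn G Set.univ I

/-- The unit disk graph on a finite set `P` of points in the plane: two distinct
points are adjacent iff their Euclidean distance is at most 1. -/
def unitDiskGraph (P : Finset (EuclideanSpace ℝ (Fin 2))) : SimpleGraph P where
  Adj p q := p ≠ q ∧ dist (p : EuclideanSpace ℝ (Fin 2)) (q : EuclideanSpace ℝ (Fin 2)) ≤ 1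
  symm := by
    constructor
    intro p q h
    exact ⟨h.1.symm, by rw [dist_comm]; exact h.2⟩
  loopless := by
    constructor
    intro p h
    exact h.1 rfl

open Real InnerProductGeometry

theorem InnerProductGeometry.norm_sub_le_of_half_le_cos_angle {V : Type*}
    [NormedAddCommGroup V] [InnerProductSpace ℝ V] {x y : V} {r : ℝ}
    (hx : ‖x‖ ≤ r) (hy : ‖y‖ ≤ r) (hxy : 1 / 2 ≤ cos (angle x y)) : ‖x - y‖ ≤ r := by
  have hx₀ := norm_nonneg x
  have hy₀ := norm_nonneg y
  -- law of cosines, then `r² - (a² + b² - ab) = (r - a)(r - b) + a(r - a) + b(r - b)`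
  have hsq : ‖x - y‖ * ‖x - y‖ ≤ r * r := by
    rw [norm_sub_sq_eq_norm_sq_add_norm_sq_sub_two_mul_norm_mul_norm_mul_cos_angle]
    nlinarith [mul_nonneg (sub_nonneg.2 hx) (sub_nonneg.2 hy), mul_nonneg hx₀ (sub_nonneg.2 hx),
      mul_nonneg hy₀ (sub_nonneg.2 hy), mul_nonneg hx₀ hy₀]
  exact mul_self_le_mul_self_iff (norm_nonneg _) (hx₀.trans hx) |>.2 hsq

theorem Complex.cos_angle_eq_cos_arg_sub {x y : ℂ} (hx : x ≠ 0) (hy : y ≠ 0) :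
    Real.cos (angle x y) = Real.cos (x.arg - y.arg) := by
  rw [Complex.angle_eq_abs_arg hx hy, Real.cos_abs, ← Real.Angle.cos_coe,
    Complex.arg_div_coe_angle hx hy, ← Real.Angle.coe_sub, Real.Angle.cos_coe]

theorem Real.half_le_cos_of_abs_le_pi_div_three {x : ℝ} (h : |x| ≤ π / 3) : 1 / 2 ≤ cos x := by
  rw [← cos_abs, ← cos_pi_div_three]
  exact cos_le_cos_of_nonneg_of_le_pi (abs_nonneg x) (by linarith [pi_pos]) h

theorem Set.exists_ne_half_le_cos_sub_of_five_lt_ncard {α : Type*} {S : Set α} (θ : α → ℝ)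
    (hS : 5 < S.ncard) : ∃ x ∈ S, ∃ y ∈ S, x ≠ y ∧ 1 / 2 ≤ cos (θ x - θ y) := by
  obtain ⟨x₀, hx₀⟩ : S.Nonempty := Set.nonempty_of_ncard_ne_zero (by omega)
  set φ : α → ℝ := fun x => toIcoMod two_pi_pos (θ x₀) (θ x) - θ x₀ with hφ
  have hφ_mem (x : α) : φ x ∈ Set.Ico 0 (2 * π) := by
    have := toIcoMod_mem_Ico two_pi_pos (θ x₀) (θ x)
    constructor <;> linarith [this.1, this.2]
  have hφ₀ : φ x₀ = 0 := by simp [hφ]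
  have hcos (x y : α) : cos (φ x - φ y) = cos (θ x - θ y) := by
    rw [hφ, sub_sub_sub_cancel_right, ← Real.Angle.cos_coe, Real.Angle.coe_sub,
      Real.Angle.coe_toIcoMod, Real.Angle.coe_toIcoMod, ← Real.Angle.coe_sub, Real.Angle.cos_coe]
  by_contra! h
  -- the last of the six sectors of width `π / 3` is within `π / 3` of `x₀`, so it is empty
  have hlast : ∀ x ∈ S, φ x < 5 * π / 3 := by
    intro x hx
    by_contra! hge
    have hne : x ≠ x₀ := by rintro rfl; linarith [hφ₀, pi_pos]
    refine (h x hx x₀ hx₀ hne).not_ge ?_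
    rw [← hcos, hφ₀, sub_zero, ← cos_two_pi_sub]
    exact half_le_cos_of_abs_le_pi_div_three (abs_le.2 ⟨by linarith [(hφ_mem x).2], by linarith⟩)
  obtain ⟨x, hx, y, hy, hxy, hsector⟩ := Set.exists_ne_map_eq_of_ncard_lt_of_maps_to
    (t := Set.Ico (0 : ℤ) 5) (by simpa [Set.ncard_eq_toFinset_card'] using hS)
    (f := fun x => ⌊φ x / (π / 3)⌋) (fun x hx => by
      refine ⟨Int.floor_nonneg.2 (div_nonneg (hφ_mem x).1 (by positivity)), Int.floor_lt.2 ?_⟩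
      rw [div_lt_iff₀ (by positivity)]
      push_cast
      linarith [hlast x hx])
  have hclose : |φ x - φ y| < π / 3 := by
    have := Int.abs_sub_lt_one_of_floor_eq_floor hsector
    rwa [← sub_div, abs_div, abs_of_pos (by positivity : 0 < π / 3),
      div_lt_one (by positivity)] at this
  exact (h x hx y hy hxy).not_ge (hcos x y ▸ half_le_cos_of_abs_le_pi_div_three hclose.le)

theorem Complex.ncard_le_five_of_pairwise_lt_dist {S : Set ℂ} {c : ℂ} {r : ℝ}
    (hc : c ∉ S) (hr : S ⊆ Metric.closedBall c r) (hS : S.Pairwise fun z w => r < dist z w) :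
    S.ncard ≤ 5 := by
  by_contra! h
  obtain ⟨z, hz, w, hw, hzw, hcos⟩ :=
    Set.exists_ne_half_le_cos_sub_of_five_lt_ncard (fun z => (z - c).arg) h
  have hne {z : ℂ} (hz : z ∈ S) : z - c ≠ 0 := sub_ne_zero.2 (ne_of_mem_of_not_mem hz hc)
  refine (hS hz hw hzw).not_ge ?_
  rw [dist_eq_norm, ← sub_sub_sub_cancel_right z w c]
  refine norm_sub_le_of_half_le_cos_angle (mem_closedBall_iff_norm.1 (hr hz))
    (mem_closedBall_iff_norm.1 (hr hw)) ?_
  rwa [cos_angle_eq_cos_arg_sub (hne hz) (hne hw)]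

theorem ncard_closedNbhd_inter_le_five_of_isIndepSet {P : Finset (EuclideanSpace ℝ (Fin 2))}
    {u : P} {X : Set P} (hX : IsIndepSet (unitDiskGraph P) X) (hu : u ∉ X) :
    (closedNbhd (unitDiskGraph P) u ∩ X).ncard ≤ 5 := by
  set e : P → ℂ := fun p => Complex.orthonormalBasisOneI.repr.symm p
  have he : Isometry e :=
    Complex.orthonormalBasisOneI.repr.symm.isometry.comp isometry_subtype_coe
  rw [← Set.ncard_image_of_injective _ he.injective]
  refine Complex.ncard_le_five_of_pairwise_lt_dist (c := e u) (r := 1) ?_ ?_ ?_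
  · rintro ⟨p, ⟨-, hp⟩, hpu⟩
    exact hu (he.injective hpu ▸ hp)
  · rintro _ ⟨p, ⟨rfl | hpu, hp⟩, rfl⟩
    · exact absurd hp hu
    · rw [Metric.mem_closedBall, he.dist_eq]
      exact hpu.2
  · rw [he.injective.injOn.pairwise_image]
    intro p hp q hq hpq
    rw [Function.onFun, he.dist_eq]
    exact lt_of_not_ge fun h => hX p hp.2 q hq.2 hpq ⟨hpq, h⟩

theorem closed_nbhd_pair_inter_indep_le_ten
    (P : Finset (EuclideanSpace ℝ (Fin 2)))
    (u v : ↥P) (X : Set ↥P)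
    (hX : IsIndepSet (unitDiskGraph P) X)
    (hu : u ∉ X) (hv : v ∉ X) :
    ((closedNbhd (unitDiskGraph P) u ∪ closedNbhd (unitDiskGraph P) v) ∩ X).ncard ≤ 10 := by
  rw [Set.union_inter_distrib_right]
  calc _ ≤ (closedNbhd (unitDiskGraph P) u ∩ X).ncard
        + (closedNbhd (unitDiskGraph P) v ∩ X).ncard := Set.ncard_union_le _ _
    _ ≤ 5 + 5 := add_le_add (ncard_closedNbhd_inter_le_five_of_isIndepSet hX hu)
        (ncard_closedNbhd_inter_le_five_of_isIndepSet hX hv)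
end

section
/- Let G = (V,E) be a finite simple graph. Let I₁ be a maximal independent set of G, I₂ a maximal independent set of the induced subgraph of G on V ∖ I₁, and I₃ a maximal independent set of the induced subgraph of G on V ∖ (I₁ ∪ I₂). Let F ⊆ V be a set such that: (a) for every u ∈ I₁ with N_G(u) ∩ (I₂ ∪ I₃) = ∅, F contains at least one neighbor of u; and (b) for every u ∈ I₁ whose set of neighbors in I₂ ∪ I₃ is a single vertex {v}, F contains some neighbor w of v with w ≠ u. Then D = I₁ ∪ I₂ ∪ I₃ ∪ F is a liar's dominating set of G. -/
/-!
Write `I = I₁ ∪ I₂ ∪ I₃` and `D = I ∪ F`. By maximality of the three layers, a vertex outside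
`I` has a neighbour in each of `I₁`, `I₂`, `I₃`, hence three dominators. A vertex of `I` lies in
`D` and has a neighbour in `D`: one in `I₁` if it is not in `I₁`, and otherwise one in `I₂ ∪ I₃`
or, failing that, the one provided by `F`. For two distinct vertices `u, v ∈ I` a third dominator
is needed: if neither lies in `I₁`, any `I₁`-neighbour of `u` will do; if `u ∈ I₁`, it is a second
neighbour of `u` in `I₂ ∪ I₃`, or else the vertex of `F` supplied by condition (a) or (b).
-/

section

variable {V : Type*} {G : SimpleGraph V} {I₁ I₂ I₃ F : Set V}

lemma mem_closedNbhd_self (v : V) : v ∈ closedNbhd G v := Or.inl rfl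

lemma mem_closedNbhd_of_adj {u v : V} (h : G.Adj v u) : u ∈ closedNbhd G v := Or.inr h.symm

lemma IsIndepSet.insert {I : Set V} (hI : IsIndepSet G I) {v : V}
    (hv : ∀ a ∈ I, ¬ G.Adj v a) : IsIndepSet G (insert v I) := by
  rintro x (rfl | hx) y (rfl | hy) hxy
  · exact absurd rfl hxy
  · exact hv y hy
  · exact fun h => hv x hx h.symm
  · exact hI x hx y hy hxy

lemma IsMaxIndepOn.exists_adj {A I : Set V} (h : IsMaxIndepOn G A I) {v : V}
    (hvA : v ∈ A) (hvI : v ∉ I) : ∃ a ∈ I, G.Adj v a := by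
  by_contra! hv
  have hI : I = insert v I :=
    h.2.2 _ (Set.insert_subset hvA h.1) (h.2.1.insert hv) (Set.subset_insert v I)
  exact hvI (hI ▸ Set.mem_insert v I)

lemma exists_adj_of_notMem_layers (h1 : IsMaxIndep G I₁)
    (h2 : IsMaxIndepOn G (Set.univ \ I₁) I₂) (h3 : IsMaxIndepOn G (Set.univ \ (I₁ ∪ I₂)) I₃)
    {v : V} (hv : v ∉ I₁ ∪ I₂ ∪ I₃) :
    ∃ a ∈ I₁, ∃ b ∈ I₂, ∃ c ∈ I₃, G.Adj v a ∧ G.Adj v b ∧ G.Adj v c := by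
  simp only [Set.mem_union, not_or] at hv
  obtain ⟨⟨hv1, hv2⟩, hv3⟩ := hv
  obtain ⟨a, ha, hva⟩ := h1.exists_adj (Set.mem_univ v) hv1
  obtain ⟨b, hb, hvb⟩ := h2.exists_adj ⟨Set.mem_univ v, hv1⟩ hv2
  obtain ⟨c, hc, hvc⟩ := h3.exists_adj ⟨Set.mem_univ v, fun h => h.elim hv1 hv2⟩ hv3
  exact ⟨a, ha, b, hb, c, hc, hva, hvb, hvc⟩

lemma two_lt_ncard_closedNbhd_inter_of_notMem_layers [Finite V] (h1 : IsMaxIndep G I₁)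
    (h2 : IsMaxIndepOn G (Set.univ \ I₁) I₂) (h3 : IsMaxIndepOn G (Set.univ \ (I₁ ∪ I₂)) I₃)
    {v : V} (hv : v ∉ I₁ ∪ I₂ ∪ I₃) :
    2 < (closedNbhd G v ∩ (I₁ ∪ I₂ ∪ I₃ ∪ F)).ncard := by
  obtain ⟨a, ha, b, hb, c, hc, hva, hvb, hvc⟩ := exists_adj_of_notMem_layers h1 h2 h3 hv
  have hc₁₂ : c ∉ I₁ ∪ I₂ := (h3.1 hc).2
  refine (Set.two_lt_ncard_iff).2 ⟨a, b, c, ⟨mem_closedNbhd_of_adj hva, .inl (.inl (.inl ha))⟩,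
    ⟨mem_closedNbhd_of_adj hvb, .inl (.inl (.inr hb))⟩,
    ⟨mem_closedNbhd_of_adj hvc, .inl (.inr hc)⟩, ?_, ?_, ?_⟩
  · rintro rfl; exact (h2.1 hb).2 ha
  · rintro rfl; exact hc₁₂ (.inl ha)
  · rintro rfl; exact hc₁₂ (.inr hb)

lemma exists_adj_mem_layers_union (h1 : IsMaxIndep G I₁)
    (ha : ∀ u ∈ I₁, G.neighborSet u ∩ (I₂ ∪ I₃) = ∅ → ∃ w ∈ F, G.Adj u w) (v : V) :
    ∃ w ∈ I₁ ∪ I₂ ∪ I₃ ∪ F, G.Adj v w := by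
  by_cases hv1 : v ∈ I₁
  · obtain he | ⟨w, hvw, hw⟩ := (G.neighborSet v ∩ (I₂ ∪ I₃)).eq_empty_or_nonempty
    · obtain ⟨w, hw, hvw⟩ := ha v hv1 he
      exact ⟨w, .inr hw, hvw⟩
    · exact ⟨w, hw.elim (fun h => .inl (.inl (.inr h))) (fun h => .inl (.inr h)), hvw⟩
  · obtain ⟨a, ha, hva⟩ := h1.exists_adj (Set.mem_univ v) hv1
    exact ⟨a, .inl (.inl (.inl ha)), hva⟩

lemma exists_mem_ne_ne_of_mem_first_layer (h1 : IsMaxIndep G I₁)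
    (ha : ∀ u ∈ I₁, G.neighborSet u ∩ (I₂ ∪ I₃) = ∅ → ∃ w ∈ F, G.Adj u w)
    (hb : ∀ u ∈ I₁, ∀ v, G.neighborSet u ∩ (I₂ ∪ I₃) = {v} → ∃ w ∈ F, w ≠ u ∧ G.Adj v w)
    {x y : V} (hx : x ∈ I₁) (hy : y ∈ I₁ ∪ I₂ ∪ I₃) (hxy : x ≠ y) :
    ∃ w ∈ (closedNbhd G x ∪ closedNbhd G y) ∩ (I₁ ∪ I₂ ∪ I₃ ∪ F), w ≠ x ∧ w ≠ y := by
  by_cases hsub : G.neighborSet x ∩ (I₂ ∪ I₃) ⊆ {y}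
  · obtain he | hy' := Set.subset_singleton_iff_eq.1 hsub
    · obtain ⟨w, hw, hxw⟩ := ha x hx he
      refine ⟨w, ⟨.inl (mem_closedNbhd_of_adj hxw), .inr hw⟩, hxw.ne', ?_⟩
      rintro rfl
      obtain (hw1 | hw2) | hw3 := hy
      · exact h1.2.1 x hx w hw1 hxy hxw
      · exact he.subset ⟨hxw, .inl hw2⟩
      · exact he.subset ⟨hxw, .inr hw3⟩
    · obtain ⟨w, hw, hwx, hyw⟩ := hb x hx y hy'
      exact ⟨w, ⟨.inr (mem_closedNbhd_of_adj hyw), .inr hw⟩, hwx, hyw.ne'⟩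
  · obtain ⟨w, ⟨hxw, hw⟩, hwy⟩ := Set.not_subset.1 hsub
    exact ⟨w, ⟨.inl (mem_closedNbhd_of_adj hxw),
      hw.elim (fun h => .inl (.inl (.inr h))) (fun h => .inl (.inr h))⟩, hxw.ne', hwy⟩

lemma exists_mem_ne_ne_of_mem_layers (h1 : IsMaxIndep G I₁)
    (ha : ∀ u ∈ I₁, G.neighborSet u ∩ (I₂ ∪ I₃) = ∅ → ∃ w ∈ F, G.Adj u w)
    (hb : ∀ u ∈ I₁, ∀ v, G.neighborSet u ∩ (I₂ ∪ I₃) = {v} → ∃ w ∈ F, w ≠ u ∧ G.Adj v w)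
    {u v : V} (hu : u ∈ I₁ ∪ I₂ ∪ I₃) (hv : v ∈ I₁ ∪ I₂ ∪ I₃) (huv : u ≠ v) :
    ∃ w ∈ (closedNbhd G u ∪ closedNbhd G v) ∩ (I₁ ∪ I₂ ∪ I₃ ∪ F), w ≠ u ∧ w ≠ v := by
  by_cases hu1 : u ∈ I₁
  · exact exists_mem_ne_ne_of_mem_first_layer h1 ha hb hu1 hv huv
  by_cases hv1 : v ∈ I₁
  · obtain ⟨w, hw, hwv, hwu⟩ := exists_mem_ne_ne_of_mem_first_layer h1 ha hb hv1 hu huv.symm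
    exact ⟨w, Set.union_comm (closedNbhd G v) _ ▸ hw, hwu, hwv⟩
  obtain ⟨a, ha, hua⟩ := h1.exists_adj (Set.mem_univ u) hu1
  exact ⟨a, ⟨.inl (mem_closedNbhd_of_adj hua), .inl (.inl (.inl ha))⟩,
    fun h => hu1 (h ▸ ha), fun h => hv1 (h ▸ ha)⟩

end

theorem three_maxIndep_with_fixes_is_LDS_general
    {V : Type*} [Fintype V] (G : SimpleGraph V)
    (I₁ I₂ I₃ F : Set V)
    (h1 : IsMaxIndep G I₁)
    (h2 : IsMaxIndepOn G (Set.univ \ I₁) I₂)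
    (h3 : IsMaxIndepOn G (Set.univ \ (I₁ ∪ I₂)) I₃)
    (ha : ∀ u ∈ I₁, G.neighborSet u ∩ (I₂ ∪ I₃) = ∅ → ∃ w ∈ F, G.Adj u w)
    (hb : ∀ u ∈ I₁, ∀ v, G.neighborSet u ∩ (I₂ ∪ I₃) = {v} →
      ∃ w ∈ F, w ≠ u ∧ G.Adj v w) :
    IsLDS G (I₁ ∪ I₂ ∪ I₃ ∪ F) := by
  have uncovered := fun {v : V} (hv : v ∉ I₁ ∪ I₂ ∪ I₃) =>
    two_lt_ncard_closedNbhd_inter_of_notMem_layers (F := F) h1 h2 h3 hv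
  refine ⟨fun v _ => ?_, fun u _ v _ huv => ?_⟩
  · by_cases hv : v ∈ I₁ ∪ I₂ ∪ I₃
    · obtain ⟨w, hw, hvw⟩ := exists_adj_mem_layers_union h1 ha v
      exact (Set.one_lt_ncard_iff).2
        ⟨v, w, ⟨mem_closedNbhd_self v, .inl hv⟩, ⟨mem_closedNbhd_of_adj hvw, hw⟩, hvw.ne⟩
    · exact (uncovered hv).le
  by_cases hu : u ∈ I₁ ∪ I₂ ∪ I₃
  · by_cases hv : v ∈ I₁ ∪ I₂ ∪ I₃
    · obtain ⟨w, hw, hwu, hwv⟩ := exists_mem_ne_ne_of_mem_layers h1 ha hb hu hv huv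
      exact (Set.two_lt_ncard_iff).2 ⟨u, v, w, ⟨.inl (mem_closedNbhd_self u), .inl hu⟩,
        ⟨.inr (mem_closedNbhd_self v), .inl hv⟩, hw, huv, hwu.symm, hwv.symm⟩
    · exact (uncovered hv).trans_le <| Set.ncard_le_ncard <|
        Set.inter_subset_inter_left _ Set.subset_union_right
  · exact (uncovered hu).trans_le <| Set.ncard_le_ncard <|
      Set.inter_subset_inter_left _ Set.subset_union_left

theorem three_maxIndep_with_fixes_is_LDS
    {V : Type*} [Fintype V] (G : SimpleGraph V)
    (I₁ I₂ I₃ F : Set V)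
    (h1 : IsMaxIndep G I₁)
    (h2 : IsMaxIndepOn G (Set.univ \ I₁) I₂)
    (h3 : IsMaxIndepOn G (Set.univ \ (I₁ ∪ I₂)) I₃)
    (hF : F ⊆ Set.univ)
    (ha : ∀ u ∈ I₁, G.neighborSet u ∩ (I₂ ∪ I₃) = ∅ → ∃ w ∈ F, G.Adj u w)
    (hb : ∀ u ∈ I₁, ∀ v, G.neighborSet u ∩ (I₂ ∪ I₃) = {v} →
      ∃ w ∈ F, w ≠ u ∧ G.Adj v w) :
    IsLDS G (I₁ ∪ I₂ ∪ I₃ ∪ F) :=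
  three_maxIndep_with_fixes_is_LDS_general G I₁ I₂ I₃ F h1 h2 h3 ha hb
end

section
/- Let G = (V,E) be the unit disk graph on a finite set P of points in the plane, and suppose G admits a liar's dominating set. Let S₁, …, S_k ⊆ V be subsets with |S_i| ≥ 3 for each i and δ_G(S_i, S_j) > 4 for all i ≠ j (a 4-separated collection). Let D* be a minimum-cardinality liar's dominating set of V in G, and for each i let D_i be a minimum-cardinality liar's dominating set of S_i in G. Then Σ_{i=1}^{k} |D_i| ≤ |D*|. -/
/-!
For each `i`, the vertices of a liar's dominating set `D*` of `G` lying in the closed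
neighbourhood `N[Sᵢ]` already form a liar's dominating set of `Sᵢ`, since the conditions on `Sᵢ`
only count vertices of `N[Sᵢ]`. Two such neighbourhoods meet only if some `u ∈ Sᵢ` and `v ∈ Sⱼ`
are at distance at most `2`, so separation makes the sets `D* ∩ N[Sᵢ]` pairwise disjoint subsets
of `D*`, each at least as large as a minimum liar's dominating set of `Sᵢ`.
-/

open scoped Function

def closedNbhdSet {V : Type*} (G : SimpleGraph V) (A : Set V) : Set V :=
  ⋃ v ∈ A, closedNbhd G v

section ClosedNbhd

variable {V : Type*} {G : SimpleGraph V}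

lemma closedNbhd_subset_closedNbhdSet {A : Set V} {v : V} (hv : v ∈ A) :
    closedNbhd G v ⊆ closedNbhdSet G A :=
  Set.subset_biUnion_of_mem (u := closedNbhd G) hv

lemma exists_walk_length_le_one_of_mem_closedNbhd {x v : V} (hx : x ∈ closedNbhd G v) :
    ∃ w : G.Walk x v, w.length ≤ 1 := by
  rcases hx with rfl | hadj
  · exact ⟨.nil, by simp⟩
  · exact ⟨hadj.toWalk, by simp⟩

lemma reachable_and_dist_le_two_of_mem_closedNbhd {x u v : V} (hu : x ∈ closedNbhd G u)
    (hv : x ∈ closedNbhd G v) : G.Reachable u v ∧ G.dist u v ≤ 2 := by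
  obtain ⟨wu, hwu⟩ := exists_walk_length_le_one_of_mem_closedNbhd hu
  obtain ⟨wv, hwv⟩ := exists_walk_length_le_one_of_mem_closedNbhd hv
  let w : G.Walk u v := wu.reverse.append wv
  refine ⟨⟨w⟩, (SimpleGraph.dist_le w).trans ?_⟩
  simp only [w, SimpleGraph.Walk.length_append, SimpleGraph.Walk.length_reverse]
  omega

lemma disjoint_closedNbhdSet {A B : Set V}
    (hsep : ∀ u ∈ A, ∀ v ∈ B, G.Reachable u v → 2 < G.dist u v) :
    Disjoint (closedNbhdSet G A) (closedNbhdSet G B) := by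
  rw [Set.disjoint_left]
  intro x hxA hxB
  obtain ⟨u, hu, hxu⟩ := Set.mem_iUnion₂.mp hxA
  obtain ⟨v, hv, hxv⟩ := Set.mem_iUnion₂.mp hxB
  obtain ⟨hreach, hdist⟩ := reachable_and_dist_le_two_of_mem_closedNbhd hxu hxv
  exact absurd (hsep u hu v hv hreach) (by omega)

end ClosedNbhd

section LiarsDomination

variable {V : Type*} {G : SimpleGraph V}

lemma IsLDSOn.mono {A B D : Set V} (hD : IsLDSOn G A D) (hBA : B ⊆ A) : IsLDSOn G B D :=
  ⟨fun v hv => hD.1 v (hBA hv), fun u hu v hv huv => hD.2 u (hBA hu) v (hBA hv) huv⟩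

lemma IsLDSOn.inter_closedNbhdSet {A D : Set V} (hD : IsLDSOn G A D) :
    IsLDSOn G A (D ∩ closedNbhdSet G A) := by
  have key : ∀ N : Set V, N ⊆ closedNbhdSet G A → N ∩ (D ∩ closedNbhdSet G A) = N ∩ D :=
    fun N hN => by rw [← Set.inter_assoc, Set.inter_right_comm, Set.inter_eq_left.mpr hN]
  refine ⟨fun v hv => ?_, fun u hu v hv huv => ?_⟩
  · rw [key _ (closedNbhd_subset_closedNbhdSet hv)]
    exact hD.1 v hv
  · rw [key _ (Set.union_subset (closedNbhd_subset_closedNbhdSet hu)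
      (closedNbhd_subset_closedNbhdSet hv))]
    exact hD.2 u hu v hv huv

end LiarsDomination

lemma Set.sum_ncard_le_ncard_of_pairwise_disjoint {ι α : Type*} [Fintype ι] {s : ι → Set α}
    {t : Set α} (ht : t.Finite) (hdisj : Pairwise (Disjoint on s)) (hst : ∀ i, s i ⊆ t) :
    ∑ i, (s i).ncard ≤ t.ncard := by
  rw [← finsum_eq_sum_of_fintype,
    ← Set.ncard_iUnion_of_finite (fun i => ht.subset (hst i)) hdisj]
  exact Set.ncard_le_ncard (Set.iUnion_subset hst) ht

theorem four_separated_sum_le_opt_general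
    (P : Finset (EuclideanSpace ℝ (Fin 2)))
    (k : ℕ) (S : Fin k → Set ↥P)
    (hsep : ∀ i j, i ≠ j → ∀ u ∈ S i, ∀ v ∈ S j,
      (unitDiskGraph P).Reachable u v → 4 < (unitDiskGraph P).dist u v)
    (Dstar : Set ↥P)
    (hDstar : IsLDS (unitDiskGraph P) Dstar)
    (D : Fin k → Set ↥P)
    (hDmin : ∀ i, ∀ D' : Set ↥P, IsLDSOn (unitDiskGraph P) (S i) D' →
      (D i).ncard ≤ D'.ncard) :
    ∑ i, (D i).ncard ≤ Dstar.ncard := by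
  set G := unitDiskGraph P
  let E : Fin k → Set ↥P := fun i => Dstar ∩ closedNbhdSet G (S i)
  have hE : ∀ i, IsLDSOn G (S i) (E i) := fun i =>
    (hDstar.mono (Set.subset_univ _)).inter_closedNbhdSet
  have hdisj : Pairwise (Disjoint on E) := fun i j hij =>
    have hN : Disjoint (closedNbhdSet G (S i)) (closedNbhdSet G (S j)) :=
      disjoint_closedNbhdSet fun u hu v hv hreach => by
        have := hsep i j hij u hu v hv hreach
        omega
    (hN.mono_left Set.inter_subset_right).mono_right Set.inter_subset_right
  calc ∑ i, (D i).ncard ≤ ∑ i, (E i).ncard :=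
        Finset.sum_le_sum fun i _ => hDmin i (E i) (hE i)
    _ ≤ Dstar.ncard :=
        Set.sum_ncard_le_ncard_of_pairwise_disjoint (Set.toFinite _) hdisj
          fun _ => Set.inter_subset_left

theorem four_separated_sum_le_opt
    (P : Finset (EuclideanSpace ℝ (Fin 2)))
    (hex : ∃ D : Set ↥P, IsLDS (unitDiskGraph P) D)
    (k : ℕ) (S : Fin k → Set ↥P)
    (hsize : ∀ i, 3 ≤ (S i).ncard)
    (hsep : ∀ i j, i ≠ j → ∀ u ∈ S i, ∀ v ∈ S j,
      (unitDiskGraph P).Reachable u v → 4 < (unitDiskGraph P).dist u v)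
    (Dstar : Set ↥P)
    (hDstar : IsLDS (unitDiskGraph P) Dstar)
    (hDstarMin : ∀ D : Set ↥P, IsLDS (unitDiskGraph P) D → Dstar.ncard ≤ D.ncard)
    (D : Fin k → Set ↥P)
    (hD : ∀ i, IsLDSOn (unitDiskGraph P) (S i) (D i))
    (hDmin : ∀ i, ∀ D' : Set ↥P, IsLDSOn (unitDiskGraph P) (S i) D' →
      (D i).ncard ≤ D'.ncard) :
    ∑ i, (D i).ncard ≤ Dstar.ncard :=
  four_separated_sum_le_opt_general P k S hsep Dstar hDstar D hDmin
end
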